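/- Let G be a weak compass structure on {0,…,m} with Req(L(x,x)) = ∅ for all x and L(x,y) = gen(L(x,y−1), L(x+1,y)) for all x < y. Then for every proposition p ∈ AP and every point (x,y): p ∈ Prop(L(x,y)) iff p ∈ Prop(L(x′,x′)) for all x′ with x ≤ x′ ≤ y (homogeneity). -/
import Mathlib


structure Atom (α β : Type) where
  req : Finset α
  prop : Finset β
deriving DecidableEq

def gen {α β : Type} [DecidableEq α] [DecidableEq β]
    (Obs : Atom α β → Finset α) (A B : Atom α β) : Atom α β :=
  ⟨A.req ∪ B.req ∪ Obs A ∪ Obs B, A.prop ∩ B.prop⟩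

/-- Homogeneity of generated labelings: in a weak compass structure on {0,…,m} with empty
requests on the diagonal and L(x,y) = gen(L(x,y−1), L(x+1,y)) for x < y, a proposition
holds at (x,y) iff it holds at (x′,x′) for every x ≤ x′ ≤ y. -/
theorem compass_homogeneity {α β : Type} [DecidableEq α] [DecidableEq β]
    (Obs : Atom α β → Finset α) (m : ℕ) (L : ℕ → ℕ → Atom α β)
    (hdiag : ∀ x, x ≤ m → (L x x).req = ∅)
    (hgen : ∀ x y, x < y → y ≤ m → L x y = gen Obs (L x (y - 1)) (L (x + 1) y)) :
    ∀ p : β, ∀ x y, x ≤ y → y ≤ m →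
      (p ∈ (L x y).prop ↔ ∀ x', x ≤ x' → x' ≤ y → p ∈ (L x' x').prop) := by
  intro p
  -- induction on y - x
  suffices h : ∀ d x y, y - x = d → x ≤ y → y ≤ m →
      (p ∈ (L x y).prop ↔ ∀ x', x ≤ x' → x' ≤ y → p ∈ (L x' x').prop) by
    intro x y hxy hym
    exact h (y - x) x y rfl hxy hym
  intro d
  induction d with
  | zero =>
    intro x y hd hxy hym
    have : x = y := le_antisymm hxy (Nat.sub_eq_zero_iff_le.mp hd)
    subst this
    constructor
    · intro hp x' h1 h2
      have : x' = x := le_antisymm h2 h1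
      subst this; exact hp
    · intro h; exact h x le_rfl le_rfl
  | succ d ih =>
    intro x y hd hxy hym
    have hlt : x < y := by omega
    rw [hgen x y hlt hym]
    simp only [gen, Finset.mem_inter]
    have h1 := ih x (y - 1) (by omega) (by omega) (by omega)
    have h2 := ih (x + 1) y (by omega) (by omega) hym
    rw [h1, h2]
    constructor
    · rintro ⟨ha, hb⟩ x' hx1 hx2
      rcases Nat.lt_or_ge x' y with h | h
      · exact ha x' hx1 (by omega)
      · exact hb x' (by omega) hx2
    · intro h
      constructor
      · intro x' h1 h2; exact h x' h1 (by omega)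
      · intro x' h1 h2; exact h x' (by omega) h2
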